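/- arXiv:1403.2442 — 3 statements merged into one kernel-verified Lean document; each statement's English description precedes it below -/
import Mathlib

section
/- If α > 1/2 or β > (1 + 1/(4c²))/α, then the polynomial p(u) = 3u⁴ − 4u³ + (1 + 4c²(1 − αβ))u² + 2c²(2α − 1)u + c⁴ has at most two positive real roots (counted with multiplicity). -/
open Polynomial

/-- If `α > 1/2` or `β > (1 + 1/(4c²))/α`, the quartic
`3u⁴ − 4u³ + (1 + 4c²(1 − αβ))u² + 2c²(2α − 1)u + c⁴`
has at most two positive real roots, counted with multiplicity. -/
theorem at_most_two_positive_roots (α β c : ℝ) (hα : 0 < α) (hβ : 1 < β) (hc : 0 < c)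
    (h : 1 / 2 < α ∨ (1 + 1 / (4 * c ^ 2)) / α < β) :
    Multiset.card
      (((C 3 * X ^ 4 - C 4 * X ^ 3 + C (1 + 4 * c ^ 2 * (1 - α * β)) * X ^ 2
        + C (2 * c ^ 2 * (2 * α - 1)) * X + C (c ^ 4) : Polynomial ℝ).roots).filter
          (fun x => 0 < x)) ≤ 2 := by
  by_contra hcontra
  push_neg at hcontra
  set P : Polynomial ℝ := C 3 * X ^ 4 - C 4 * X ^ 3 + C (1 + 4 * c ^ 2 * (1 - α * β)) * X ^ 2
        + C (2 * c ^ 2 * (2 * α - 1)) * X + C (c ^ 4) with hP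
  have hP0 : P ≠ 0 := by
    intro h0
    have h00 : P.coeff 0 = 0 := by rw [h0]; simp
    rw [hP] at h00
    simp only [coeff_add, coeff_sub, coeff_C_mul, coeff_X_pow, coeff_C, coeff_X] at h00
    norm_num at h00
    nlinarith [pow_pos hc 4]
  set t := P.roots.filter (fun x => 0 < x) with ht
  -- extract three elements
  have h1 : 0 < Multiset.card t := by omega
  obtain ⟨r1, hr1⟩ := Multiset.card_pos_iff_exists_mem.mp h1
  obtain ⟨t1, ht1⟩ := Multiset.exists_cons_of_mem hr1
  have h2 : 0 < Multiset.card t1 := by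
    have := congrArg Multiset.card ht1; simp at this; omega
  obtain ⟨r2, hr2⟩ := Multiset.card_pos_iff_exists_mem.mp h2
  obtain ⟨t2, ht2⟩ := Multiset.exists_cons_of_mem hr2
  have h3 : 0 < Multiset.card t2 := by
    have e1 := congrArg Multiset.card ht1
    have e2 := congrArg Multiset.card ht2
    simp at e1 e2; omega
  obtain ⟨r3, hr3⟩ := Multiset.card_pos_iff_exists_mem.mp h3
  obtain ⟨t3, ht3⟩ := Multiset.exists_cons_of_mem hr3
  have hsle : ({r1, r2, r3} : Multiset ℝ) ≤ t := by
    rw [ht1, ht2, ht3]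
    show r1 ::ₘ r2 ::ₘ r3 ::ₘ 0 ≤ _
    exact Multiset.cons_le_cons _ (Multiset.cons_le_cons _ (Multiset.cons_le_cons _ t3.zero_le))
  have hpos : ∀ r ∈ ({r1, r2, r3} : Multiset ℝ), 0 < r := by
    intro r hr
    have : r ∈ t := Multiset.mem_of_le hsle hr
    exact (Multiset.mem_filter.mp this).2
  have hp1 : (0:ℝ) < r1 := hpos r1 (by simp)
  have hp2 : (0:ℝ) < r2 := hpos r2 (by simp)
  have hp3 : (0:ℝ) < r3 := hpos r3 (by simp)
  have hroots : ({r1, r2, r3} : Multiset ℝ) ≤ P.roots :=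
    le_trans hsle (Multiset.filter_le _ _)
  have hdvd : ((X - C r1) * (X - C r2) * (X - C r3) : Polynomial ℝ) ∣ P := by
    have := (Multiset.prod_X_sub_C_dvd_iff_le_roots hP0 {r1, r2, r3}).mpr hroots
    simpa [Multiset.map_cons, Multiset.prod_cons, mul_assoc] using this
  obtain ⟨q, hq⟩ := hdvd
  -- degree of q is 1
  have hdegP : P.natDegree = 4 := by
    rw [hP]; compute_degree!
  have hq0 : q ≠ 0 := by rintro rfl; simp at hq; exact hP0 hq
  have hdegprod : ((X - C r1) * (X - C r2) * (X - C r3) : Polynomial ℝ).natDegree = 3 := by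
    rw [natDegree_mul (by apply mul_ne_zero <;> exact X_sub_C_ne_zero _) (X_sub_C_ne_zero _),
      natDegree_mul (X_sub_C_ne_zero _) (X_sub_C_ne_zero _)]
    simp
  have hdegq : q.natDegree = 1 := by
    have := natDegree_mul (p := ((X - C r1) * (X - C r2) * (X - C r3) : Polynomial ℝ))
      (q := q) (by apply mul_ne_zero; apply mul_ne_zero; all_goals exact X_sub_C_ne_zero _) hq0
    rw [← hq, hdegP, hdegprod] at this
    omega
  obtain ⟨a, b, hab⟩ := exists_eq_X_add_C_of_natDegree_le_one (le_of_eq hdegq)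
  rw [hab] at hq
  -- expand and compare coefficients
  have hexp : ((X - C r1) * (X - C r2) * (X - C r3) * (C a * X + C b) : Polynomial ℝ)
      = C a * X ^ 4 + C (b - a * (r1 + r2 + r3)) * X ^ 3
        + C (a * (r1*r2 + r1*r3 + r2*r3) - b * (r1 + r2 + r3)) * X ^ 2
        + C (b * (r1*r2 + r1*r3 + r2*r3) - a * (r1*r2*r3)) * X + C (-(b * (r1*r2*r3))) := by
    simp only [C_mul, C_add, C_sub, C_neg]
    ring
  rw [hexp] at hq
  have c4 := congrArg (fun p => Polynomial.coeff p 4) hq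
  have c2 := congrArg (fun p => Polynomial.coeff p 2) hq
  have c1 := congrArg (fun p => Polynomial.coeff p 1) hq
  have c0 := congrArg (fun p => Polynomial.coeff p 0) hq
  rw [hP] at c4 c2 c1 c0
  simp only [coeff_add, coeff_sub, coeff_C_mul, coeff_X_pow, coeff_C, coeff_X] at c4 c2 c1 c0
  norm_num at c4 c2 c1 c0
  -- a = 3, and b < 0
  have hb : b < 0 := by nlinarith [pow_pos hc 4, mul_pos (mul_pos hp1 hp2) hp3]
  rcases h with hcase | hcase
  · -- coeff 1 : b*e2 - a*e3 = 2c²(2α−1) > 0 but LHS < 0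
    nlinarith [mul_pos hp1 hp2, mul_pos hp1 hp3, mul_pos hp2 hp3,
      mul_pos (mul_pos hp1 hp2) hp3, sq_nonneg c, mul_pos hc hc]
  · -- coeff 2 : a*e2 - b*e1 = 1+4c²(1−αβ) < 0 but LHS > 0
    have h4 : (0:ℝ) < 4 * c ^ 2 := by positivity
    have hαβ : 1 + 1 / (4 * c ^ 2) < α * β := by
      have := (div_lt_iff₀ hα).mp hcase
      nlinarith
    have key : 4 * c ^ 2 * (1 / (4 * c ^ 2)) = 1 := by field_simp
    have hneg : 1 + 4 * c ^ 2 * (1 - α * β) < 0 := by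
      nlinarith [mul_lt_mul_of_pos_left hαβ h4]
    nlinarith [mul_pos hp1 hp2, mul_pos hp1 hp3, mul_pos hp2 hp3]
end

section
/- For Case 2 parameters α = 2/5, β = 5/2, c = √2/2, the quartic 3u⁴ − 4u³ + (1 + 4c²(1 − αβ))u² + 2c²(2α − 1)u + c⁴ simplifies to 3u⁴ − 4u³ + u² − (1/5)u + 1/4 and has exactly two real roots, both lying in the open interval (0, u_{C0}) where u_{C0} = (1 + √3)/2. -/
private noncomputable def qq (u : ℝ) : ℝ := 3 * u ^ 4 - 4 * u ^ 3 + u ^ 2 - (1 / 5) * u + 1 / 4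
private noncomputable def qd (u : ℝ) : ℝ := 12 * u ^ 3 - 12 * u ^ 2 + 2 * u - 1 / 5

private lemma qq_deriv (x : ℝ) : HasDerivAt qq (qd x) x := by
  have h : HasDerivAt (fun u : ℝ => 3 * u ^ 4 - 4 * u ^ 3 + u ^ 2 - (1 / 5) * u + 1 / 4)
      (3 *((4:ℕ) * x ^ (4-1)) - 4 * ((3:ℕ) * x ^ (3-1)) + (2:ℕ) * x ^ (2-1) - (1 / 5) * 1) x := by
    exact ((((hasDerivAt_pow 4 x).const_mul 3).sub ((hasDerivAt_pow 3 x).const_mul 4)).add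
      (hasDerivAt_pow 2 x)).sub ((hasDerivAt_id' x).const_mul (1/5)) |>.add_const (1/4)
  convert h using 1
  · rfl
  unfold qd; push_cast; ring

private lemma qq_cont : Continuous qq := by unfold qq; fun_prop

private lemma qd_neg {x : ℝ} (hx : x < 4/5) : qd x < 0 := by
  unfold qd
  nlinarith [sq_nonneg x, sq_nonneg (x - 1/3), sq_nonneg (x - 4/5), sq_nonneg (x - 1/2),
    mul_nonneg (sq_nonneg x) (le_of_lt (sub_pos.2 hx)),
    mul_nonneg (mul_nonneg (sq_nonneg x) (sq_nonneg x)) (le_of_lt (sub_pos.2 hx))]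

private lemma qd_pos {x : ℝ} (hx : 17/20 < x) : 0 < qd x := by
  unfold qd
  nlinarith [sq_nonneg x, sq_nonneg (x - 1), mul_nonneg (sq_nonneg x) (le_of_lt (sub_pos.2 hx)),
    mul_nonneg (sq_nonneg (x-1)) (le_of_lt (sub_pos.2 hx))]

private lemma qd_inj {x y : ℝ} (hx : qd x = 0) (hy : qd y = 0) : x = y := by
  have bx1 : 4/5 ≤ x := by by_contra h; exact absurd hx (ne_of_lt (qd_neg (not_le.1 h)))
  have bx2 : x ≤ 17/20 := by by_contra h; exact absurd hx (ne_of_gt (qd_pos (not_le.1 h)))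
  have by1 : 4/5 ≤ y := by by_contra h; exact absurd hy (ne_of_lt (qd_neg (not_le.1 h)))
  have by2 : y ≤ 17/20 := by by_contra h; exact absurd hy (ne_of_gt (qd_pos (not_le.1 h)))
  unfold qd at hx hy
  nlinarith [sq_nonneg (x - y), sq_nonneg (x + y), sq_nonneg (x + y - 17/10)]

private lemma no_three_roots {a b c : ℝ} (hab : a < b) (hbc : b < c)
    (ha : qq a = 0) (hb : qq b = 0) (hc : qq c = 0) : False := by
  obtain ⟨p, hp, hp0⟩ := exists_hasDerivAt_eq_zero hab qq_cont.continuousOn (ha.trans hb.symm)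
    (fun x _ => qq_deriv x)
  obtain ⟨r, hr, hr0⟩ := exists_hasDerivAt_eq_zero hbc qq_cont.continuousOn (hb.trans hc.symm)
    (fun x _ => qq_deriv x)
  have h1 := qd_inj hp0 hr0
  have h2 : p < r := lt_trans hp.2 hr.1
  linarith

/-- For Case 2 parameters (`α = 2/5`, `β = 5/2`, `c = √2/2`) the quartic
`3u⁴ − 4u³ + u² − (1/5)u + 1/4` has exactly two real roots, both lying in the open
interval `(0, u_{C0})` with `u_{C0} = (1 + √3)/2`. -/
theorem case2_quartic_two_roots :
    ∃ u₁ u₂ : ℝ, u₁ ≠ u₂ ∧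
      u₁ ∈ Set.Ioo (0 : ℝ) ((1 + Real.sqrt 3) / 2) ∧
      u₂ ∈ Set.Ioo (0 : ℝ) ((1 + Real.sqrt 3) / 2) ∧
      3 * u₁ ^ 4 - 4 * u₁ ^ 3 + u₁ ^ 2 - (1 / 5) * u₁ + 1 / 4 = 0 ∧
      3 * u₂ ^ 4 - 4 * u₂ ^ 3 + u₂ ^ 2 - (1 / 5) * u₂ + 1 / 4 = 0 ∧
      ∀ u : ℝ, 3 * u ^ 4 - 4 * u ^ 3 + u ^ 2 - (1 / 5) * u + 1 / 4 = 0 →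
        u = u₁ ∨ u = u₂ := by
  have hq : ∀ u : ℝ, qq u = 3 * u ^ 4 - 4 * u ^ 3 + u ^ 2 - (1 / 5) * u + 1 / 4 :=
    fun u => rfl
  have hsqrt : (1 : ℝ) < Real.sqrt 3 := by
    nlinarith [Real.sq_sqrt (by norm_num : (3:ℝ) ≥ 0), Real.sqrt_nonneg 3]
  have hub : (1 : ℝ) < (1 + Real.sqrt 3) / 2 := by linarith
  have hA : qq (3/5) = 37/2500 := by unfold qq; norm_num
  have hB : qq (4/5) = -223/2500 := by unfold qq; norm_num
  have hC : qq 1 = 1/20 := by unfold qq; norm_num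
  have h1 : (0:ℝ) ∈ qq '' Set.Ioo (3/5) (4/5) := by
    apply intermediate_value_Ioo' (by norm_num) qq_cont.continuousOn
    rw [hA, hB]; constructor <;> norm_num
  have h2 : (0:ℝ) ∈ qq '' Set.Ioo (4/5) 1 := by
    apply intermediate_value_Ioo (by norm_num) qq_cont.continuousOn
    rw [hB, hC]; constructor <;> norm_num
  obtain ⟨u₁, hu₁, hu₁0⟩ := h1
  obtain ⟨u₂, hu₂, hu₂0⟩ := h2
  refine ⟨u₁, u₂, by linarith [hu₁.2, hu₂.1], ⟨by linarith [hu₁.1], by linarith [hu₁.2]⟩,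
    ⟨by linarith [hu₂.1], by linarith [hu₂.2]⟩, by rw [← hq]; exact hu₁0,
    by rw [← hq]; exact hu₂0, ?_⟩
  intro u hu
  rw [← hq] at hu
  have h12 : u₁ < u₂ := by linarith [hu₁.2, hu₂.1]
  rcases lt_trichotomy u u₁ with h | h | h
  · exact absurd (no_three_roots h h12 hu hu₁0 hu₂0) not_false
  · exact Or.inl h
  rcases lt_trichotomy u u₂ with h' | h' | h'
  · exact absurd (no_three_roots h h' hu₁0 hu hu₂0) not_false
  · exact Or.inr h'
  · exact absurd (no_three_roots h12 h' hu₁0 hu₂0 hu) not_false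
end

section
/- For the desingularised system linearised at (u_H, w_H) = (1/β, 1 − 1/β), the equilibrium is a saddle for 0 < c < c₁(β), and has two eigenvalues with positive real part for c > c₁(β), where c₁(β) = √(β−1)/β; moreover the eigenvalues are non-real exactly when c > c₂(α,β) = 2√α(β−1)/√(β(4αβ(β−1) − 1)) (when this quantity is real). -/
/-!
At the healed state `(1/β, 1 - 1/β)` the factor `f(u, w) = 1 - u - w` vanishes, so every
partial derivative of the system is a short rational expression in `α, β, c`. They give
`det = α (β - 1) (β² c² - (β - 1)) / β³`, `tr = c / β` and
`β³ (tr² - 4 det) = 4 α (β - 1)² - c² β (4 α β (β - 1) - 1)`, from which the signs of the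
determinant, the trace and the discriminant are read off.
-/

-- The right-hand sides `du/dz̄` and `dw/dz̄` of the system, with `f` expanded.
noncomputable def desingU (c u w : ℝ) : ℝ := -u * (1 - u - w) * (c ^ 2 + u * (1 - u - 2 * w)) / c

noncomputable def desingW (α β c u w : ℝ) : ℝ :=
  u * w * (1 - u - w) * (1 - 2 * u - w) / c - α * c * w * (β * u - 1)

section HealedState

variable {α β c : ℝ}

theorem hasDerivAt_desingU_left (hβ : β ≠ 0) (hc : c ≠ 0) :
    HasDerivAt (fun u => desingU c u (1 - 1 / β))
      ((β ^ 2 * c ^ 2 - (β - 1)) / (β ^ 3 * c)) (1 / β) := by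
  have h := ((((hasDerivAt_id (1 / β)).neg).mul
      (((hasDerivAt_id (1 / β)).const_sub 1).sub_const (1 - 1 / β))).mul
      ((((hasDerivAt_id (1 / β)).mul
        (((hasDerivAt_id (1 / β)).const_sub 1).sub_const (2 * (1 - 1 / β)))).const_add
        (c ^ 2)))).div_const c
  refine h.congr_deriv ?_
  simp only [id, Pi.mul_apply, Pi.neg_apply]
  field_simp
  ring

theorem hasDerivAt_desingU_right (hβ : β ≠ 0) (hc : c ≠ 0) :
    HasDerivAt (fun w => desingU c (1 / β) w)
      ((β ^ 2 * c ^ 2 - (β - 1)) / (β ^ 3 * c)) (1 - 1 / β) := by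
  have h := ((((hasDerivAt_id (1 - 1 / β)).const_sub (1 - 1 / β)).const_mul (-(1 / β))).mul
      (((((hasDerivAt_id (1 - 1 / β)).const_mul 2).const_sub (1 - 1 / β)).const_mul
        (1 / β)).const_add (c ^ 2))).div_const c
  refine h.congr_deriv ?_
  simp only [id]
  field_simp
  ring

theorem hasDerivAt_desingW_left (hβ : β ≠ 0) (hc : c ≠ 0) :
    HasDerivAt (fun u => desingW α β c u (1 - 1 / β))
      ((β - 1) * (1 - α * β ^ 3 * c ^ 2) / (β ^ 3 * c)) (1 / β) := by
  have h := (((((hasDerivAt_id (1 / β)).mul_const (1 - 1 / β)).mul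
      (((hasDerivAt_id (1 / β)).const_sub 1).sub_const (1 - 1 / β))).mul
      ((((hasDerivAt_id (1 / β)).const_mul 2).const_sub 1).sub_const (1 - 1 / β))).div_const
        c).sub
      ((((hasDerivAt_id (1 / β)).const_mul β).sub_const 1).const_mul (α * c * (1 - 1 / β)))
  refine h.congr_deriv ?_
  simp only [id, Pi.mul_apply]
  field_simp
  ring

theorem hasDerivAt_desingW_right (hβ : β ≠ 0) (hc : c ≠ 0) :
    HasDerivAt (fun w => desingW α β c (1 / β) w) ((β - 1) / (β ^ 3 * c)) (1 - 1 / β) := by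
  have h := (((((hasDerivAt_id (1 - 1 / β)).const_mul (1 / β)).mul
      ((hasDerivAt_id (1 - 1 / β)).const_sub (1 - 1 / β))).mul
      ((hasDerivAt_id (1 - 1 / β)).const_sub (1 - 2 * (1 / β)))).div_const c).sub
      (((hasDerivAt_id (1 - 1 / β)).const_mul (α * c)).mul_const (β * (1 / β) - 1))
  refine h.congr_deriv ?_
  simp only [id, Pi.mul_apply]
  field_simp
  ring

end HealedState

theorem div_sqrt_lt_iff_sq_lt {m q c : ℝ} (hm : 0 ≤ m) (hq : 0 < q) (hc : 0 ≤ c) :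
    m / √q < c ↔ m ^ 2 < c ^ 2 * q := by
  have hsq : 0 < √q := Real.sqrt_pos.2 hq
  rw [div_lt_iff₀ hsq, ← pow_lt_pow_iff_left₀ hm (by positivity) two_ne_zero, mul_pow,
    Real.sq_sqrt hq.le]

/-- Linearisation of the desingularised system at the healed state `(1/β, 1 − 1/β)`:
it is a saddle (negative Jacobian determinant) for `0 < c < c₁(β)`, has two eigenvalues
with positive real part (positive determinant and positive trace) for `c > c₁(β)`,
where `c₁(β) = √(β−1)/β`; and (when `c₂(α,β)` is real, i.e. `4αβ(β−1) − 1 > 0`) the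
eigenvalues are non-real (negative discriminant) exactly when `c > c₂(α,β)`. -/
theorem healed_state_classification (α β c : ℝ) (hα : 0 < α) (hβ : 1 < β) (hc : 0 < c) :
    let f : ℝ → ℝ → ℝ := fun u w => 1 - u - w
    let Fu : ℝ → ℝ → ℝ := fun u w => -u * f u w * (c ^ 2 + u * f u (2 * w)) / c
    let Fw : ℝ → ℝ → ℝ := fun u w => u * w * f u w * f (2 * u) w / c - α * c * w * (β * u - 1)
    let uH : ℝ := 1 / β
    let wH : ℝ := 1 - 1 / β
    let a11 := deriv (fun u => Fu u wH) uH
    let a12 := deriv (fun w => Fu uH w) wH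
    let a21 := deriv (fun u => Fw u wH) uH
    let a22 := deriv (fun w => Fw uH w) wH
    let det := a11 * a22 - a12 * a21
    let tr := a11 + a22
    (c < Real.sqrt (β - 1) / β → det < 0) ∧
    (Real.sqrt (β - 1) / β < c → 0 < det ∧ 0 < tr) ∧
    (1 / (4 * β * (β - 1)) < α →
      (tr ^ 2 - 4 * det < 0 ↔
        2 * Real.sqrt α * (β - 1) / Real.sqrt (β * (4 * α * β * (β - 1) - 1)) < c)) := by
  intro f Fu Fw uH wH a11 a12 a21 a22 det tr
  have hβ0 : 0 < β := one_pos.trans hβ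
  have hαβ : 0 < α * (β - 1) := mul_pos hα (sub_pos.2 hβ)
  have h11 : a11 = _ := (hasDerivAt_desingU_left hβ0.ne' hc.ne').deriv
  have h12 : a12 = _ := (hasDerivAt_desingU_right hβ0.ne' hc.ne').deriv
  have h21 : a21 = _ := (hasDerivAt_desingW_left (α := α) hβ0.ne' hc.ne').deriv
  have h22 : a22 = _ := (hasDerivAt_desingW_right (α := α) hβ0.ne' hc.ne').deriv
  have hdet : det = α * (β - 1) * ((c * β) ^ 2 - (β - 1)) / β ^ 3 := by
    simp only [det, h11, h12, h21, h22]; field_simp; ring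
  have htr : tr = c / β := by simp only [tr, h11, h22]; field_simp; ring
  refine ⟨fun h => ?_, fun h => ⟨?_, ?_⟩, fun hreal => ?_⟩
  · have hcβ := (Real.lt_sqrt (by positivity)).1 ((lt_div_iff₀ hβ0).1 h)
    rw [hdet]
    exact div_neg_of_neg_of_pos (mul_neg_of_pos_of_neg hαβ (by linarith)) (by positivity)
  · have hcβ := (Real.sqrt_lt' (by positivity)).1 ((div_lt_iff₀ hβ0).1 h)
    rw [hdet]
    exact div_pos (mul_pos hαβ (by linarith)) (by positivity)
  · rw [htr]; positivity
  · have hD : 0 < β * (4 * α * β * (β - 1) - 1) := by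
      have := (div_lt_iff₀ (by positivity)).1 hreal
      nlinarith
    have hdisc : tr ^ 2 - 4 * det
        = (4 * α * (β - 1) ^ 2 - c ^ 2 * (β * (4 * α * β * (β - 1) - 1))) / β ^ 3 := by
      rw [hdet, htr]; field_simp; ring
    rw [hdisc, div_lt_iff₀ (by positivity), zero_mul, sub_neg,
      div_sqrt_lt_iff_sq_lt (by positivity) hD hc.le, mul_pow, mul_pow, Real.sq_sqrt hα.le]
    ring_nf
end
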